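/- arXiv:1703.07710 — 4 statements merged into one kernel-verified Lean document; each statement's English description precedes it below -/
import Mathlib

section
/- Let $a_1, a_2, \ldots, a_m$ be a sequence of real numbers each taking values in $[a_{\min}, 1]$ with $a_{\min} > 0$ and $m > 0$. Then $\sum_{k=1}^m \frac{a_k}{\sum_{i=1}^k a_i} \leq \ln\left(\frac{m e}{a_{\min}}\right)$. -/
/-!
With partial sums `S k`, each term `a k / S k` with `k ≥ 2` is a lower Riemann sum for
`∫_{S (k-1)}^{S k} dx / x = log S k - log S (k-1)`, so the sum telescopes to at most
`1 + log S m - log a 1 ≤ 1 + log m - log amin`.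
-/

open Finset Real

lemma div_add_le_log_sub_log {s a : ℝ} (hs : 0 < s) (hsa : 0 < s + a) :
    a / (s + a) ≤ log (s + a) - log s := by
  have h := one_sub_inv_le_log_of_pos (div_pos hsa hs)
  rwa [inv_div, log_div hsa.ne' hs.ne', one_sub_div hsa.ne', add_sub_cancel_left] at h

lemma sum_Icc_div_partialSum_le (a : ℕ → ℝ) {n : ℕ} (hn : 1 ≤ n)
    (ha : ∀ k ∈ Icc 1 n, 0 < a k) :
    ∑ k ∈ Icc 1 n, a k / ∑ i ∈ Icc 1 k, a i
      ≤ 1 + log (∑ i ∈ Icc 1 n, a i) - log (a 1) := by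
  induction n, hn using Nat.le_induction with
  | base => simp [(ha 1 (by simp)).ne']
  | succ n hn ih =>
    have ha' : ∀ k ∈ Icc 1 n, 0 < a k :=
      fun k hk => ha k (Icc_subset_Icc_right n.le_succ hk)
    have hS : 0 < ∑ i ∈ Icc 1 n, a i := sum_pos ha' (nonempty_Icc.2 hn)
    have hlast : 0 < a (n + 1) := ha (n + 1) (by simp)
    have step := div_add_le_log_sub_log hS (add_pos hS hlast)
    rw [sum_Icc_succ_top (by omega), sum_Icc_succ_top (by omega)]
    linarith [ih ha']

theorem stmt_0 (m : ℕ) (hm : 0 < m) (a : ℕ → ℝ) (amin : ℝ) (hamin : 0 < amin)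
    (hb : ∀ k, 1 ≤ k → k ≤ m → a k ∈ Set.Icc amin 1) :
    ∑ k ∈ Finset.Icc 1 m, a k / (∑ i ∈ Finset.Icc 1 k, a i)
      ≤ Real.log (m * Real.exp 1 / amin) := by
  have ha : ∀ k ∈ Icc 1 m, a k ∈ Set.Icc amin 1 :=
    fun k hk => hb k (mem_Icc.1 hk).1 (mem_Icc.1 hk).2
  have hpos : ∀ k ∈ Icc 1 m, 0 < a k := fun k hk => hamin.trans_le (ha k hk).1
  have hsum_pos : 0 < ∑ i ∈ Icc 1 m, a i := sum_pos hpos (nonempty_Icc.2 hm)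
  have hsum_le : ∑ i ∈ Icc 1 m, a i ≤ m := by
    simpa using sum_le_card_nsmul (Icc 1 m) a 1 fun i hi => (ha i hi).2
  have hfirst : amin ≤ a 1 := (hb 1 le_rfl hm).1
  calc ∑ k ∈ Icc 1 m, a k / ∑ i ∈ Icc 1 k, a i
      ≤ 1 + log (∑ i ∈ Icc 1 m, a i) - log (a 1) := sum_Icc_div_partialSum_le a hm hpos
    _ ≤ 1 + log m - log amin := by
      gcongr
    _ = log (m * exp 1 / amin) := by
      rw [log_div (by positivity) hamin.ne', log_mul (by positivity) (exp_ne_zero 1), log_exp]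
      ring
end

section
/- Let $\{\mathcal{F}_i\}$ be a filtration and $X_1, X_2, \ldots$ Bernoulli random variables with $\mathbb{P}(X_i = 1 \mid \mathcal{F}_{i-1}) = P_i$, where $P_i$ is $\mathcal{F}_{i-1}$-measurable and $X_i$ is $\mathcal{F}_i$-measurable. Then for any $W > 0$: $\mathbb{P}\left(\exists n : \sum_{t=1}^n X_t < \frac{1}{2}\sum_{t=1}^n P_t - W\right) \leq e^{-W}$. -/
/-!
`M n = exp (½ ∑_{t ≤ n} P_t - ∑_{t ≤ n} X_t)` is a positive supermartingale with `M 0 = 1`.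
Indeed `e^{-x} ≤ 1 - (1 - e⁻¹) x` on `[0, 1]` by convexity, so
`E[M (n+1) | ℱ n] ≤ M n · e^{P/2} (1 - (1 - e⁻¹) P) ≤ M n · e^{P/2 - (1 - e⁻¹) P} ≤ M n`,
using `1 - e⁻¹ ≥ 1/2`. The event in question lies in `{∃ n, M n ≥ e^W}`, which has probability
at most `e^{-W}` by Ville's maximal inequality; the latter follows from optional stopping at the
hitting time of `[e^W, ∞)` and Markov's inequality.
-/

open MeasureTheory Finset

namespace MeasureTheory

variable {Ω : Type*} {m0 : MeasurableSpace Ω} {μ : Measure Ω} {𝒢 : Filtration ℕ m0}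
  {f : ℕ → Ω → ℝ}

theorem Supermartingale.integral_stoppedValue_le [SigmaFiniteFiltration μ 𝒢]
    (hf : Supermartingale f 𝒢 μ) {τ : Ω → WithTop ℕ} (hτ : IsStoppingTime 𝒢 τ) {N : ℕ}
    (hτN : ∀ ω, τ ω ≤ N) :
    ∫ ω, stoppedValue f τ ω ∂μ ≤ ∫ ω, f 0 ω ∂μ := by
  have h := hf.neg.expected_stoppedValue_mono (isStoppingTime_const 𝒢 0) hτ
    (fun _ => bot_le) hτN
  simpa [stoppedValue, integral_neg] using h

theorem Supermartingale.measure_exists_le_ge_le [IsFiniteMeasure μ]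
    (hf : Supermartingale f 𝒢 μ) (hf0 : 0 ≤ f) {ε : ℝ} (hε : 0 < ε) (N : ℕ) :
    μ {ω | ∃ n ≤ N, ε ≤ f n ω} ≤ ENNReal.ofReal ((∫ ω, f 0 ω ∂μ) / ε) := by
  set τ : Ω → WithTop ℕ := fun ω => (hittingBtwn f (Set.Ici ε) 0 N ω : ℕ)
  have hτ : IsStoppingTime 𝒢 τ :=
    hf.stronglyAdapted.adapted.isStoppingTime_hittingBtwn measurableSet_Ici
  have hτN : ∀ ω, τ ω ≤ N := fun ω => WithTop.coe_le_coe.2 (hittingBtwn_le ω)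
  have h_sub : {ω | ∃ n ≤ N, ε ≤ f n ω} ⊆ {ω | ε ≤ stoppedValue f τ ω} :=
    fun ω ⟨n, hn, hfn⟩ => stoppedValue_hittingBtwn_mem ⟨n, ⟨Nat.zero_le n, hn⟩, hfn⟩
  have h_markov : ε * μ.real {ω | ε ≤ stoppedValue f τ ω} ≤ ∫ ω, stoppedValue f τ ω ∂μ :=
    mul_meas_ge_le_integral_of_nonneg (ae_of_all _ fun ω => hf0 _ ω)
    (integrable_stoppedValue ℕ hτ hf.integrable hτN) ε
  have h_stop := hf.integral_stoppedValue_le hτ hτN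
  calc μ {ω | ∃ n ≤ N, ε ≤ f n ω} ≤ μ {ω | ε ≤ stoppedValue f τ ω} := measure_mono h_sub
    _ = ENNReal.ofReal (μ.real {ω | ε ≤ stoppedValue f τ ω}) := (ofReal_measureReal).symm
    _ ≤ ENNReal.ofReal ((∫ ω, f 0 ω ∂μ) / ε) :=
      ENNReal.ofReal_le_ofReal (by rw [le_div_iff₀' hε]; linarith)

theorem Supermartingale.measure_exists_ge_le [IsFiniteMeasure μ]
    (hf : Supermartingale f 𝒢 μ) (hf0 : 0 ≤ f) {ε : ℝ} (hε : 0 < ε) :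
    μ {ω | ∃ n, ε ≤ f n ω} ≤ ENNReal.ofReal ((∫ ω, f 0 ω ∂μ) / ε) := by
  have h_union : {ω | ∃ n, ε ≤ f n ω} = ⋃ N, {ω | ∃ n ≤ N, ε ≤ f n ω} := by
    ext ω
    simp only [Set.mem_iUnion]
    exact ⟨fun ⟨n, h⟩ => ⟨n, n, le_rfl, h⟩, fun ⟨_, n, _, h⟩ => ⟨n, h⟩⟩
  have h_mono : Monotone fun N => {ω | ∃ n ≤ N, ε ≤ f n ω} :=
    fun _ _ hNM _ ⟨n, hn, h⟩ => ⟨n, hn.trans hNM, h⟩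
  rw [h_union, h_mono.measure_iUnion]
  exact iSup_le (hf.measure_exists_le_ge_le hf0 hε)

lemma ae_condExp_mem_Icc [IsFiniteMeasure μ] {m : MeasurableSpace Ω} (hm : m ≤ m0)
    {g : Ω → ℝ} {a b : ℝ} (hg : Integrable g μ) (hab : ∀ᵐ ω ∂μ, g ω ∈ Set.Icc a b) :
    ∀ᵐ ω ∂μ, μ[g | m] ω ∈ Set.Icc a b := by
  have ha := condExp_mono (m := m) (integrable_const a) hg (hab.mono fun _ h => h.1)
  have hb := condExp_mono (m := m) hg (integrable_const b) (hab.mono fun _ h => h.2)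
  rw [condExp_const hm] at ha hb
  filter_upwards [ha, hb] with ω ha hb using ⟨ha, hb⟩

lemma condExp_const_sub_mul [IsFiniteMeasure μ] {m : MeasurableSpace Ω} (hm : m ≤ m0)
    {g : Ω → ℝ} (hg : Integrable g μ) (a c : ℝ) :
    μ[fun ω => a - c * g ω | m] =ᵐ[μ] fun ω => a - c * μ[g | m] ω := by
  have h_sub := condExp_sub (m := m) (integrable_const a) (hg.const_mul c)
  rw [condExp_const hm] at h_sub
  filter_upwards [h_sub, condExp_smul (m := m) (μ := μ) c g] with ω h_sub h_smul
  change μ[(fun _ => a) - fun x => c * g x | m] ω = _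
  rw [h_sub, Pi.sub_apply]
  change a - μ[c • g | m] ω = _
  rw [h_smul, Pi.smul_apply, smul_eq_mul]

end MeasureTheory

namespace Real

lemma exp_neg_le_one_sub_mul {x : ℝ} (hx : x ∈ Set.Icc (0 : ℝ) 1) :
    exp (-x) ≤ 1 - (1 - exp (-1)) * x := by
  have h := convexOn_exp.2 (Set.mem_univ 0) (Set.mem_univ (-1)) (sub_nonneg.2 hx.2) hx.1
    (sub_add_cancel 1 x)
  simp only [smul_eq_mul, mul_zero, zero_add, exp_zero, mul_one, mul_neg_one] at h
  linarith

lemma exp_half_mul_one_sub_le_one {q : ℝ} (hq : 0 ≤ q) :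
    exp (q / 2) * (1 - (1 - exp (-1)) * q) ≤ 1 := by
  have h_half : exp (-1) < 1 / 2 := exp_neg_one_lt_half
  calc exp (q / 2) * (1 - (1 - exp (-1)) * q)
      ≤ exp (q / 2) * exp (-((1 - exp (-1)) * q)) := by
        gcongr
        linarith [add_one_le_exp (-((1 - exp (-1)) * q))]
    _ = exp (q / 2 - (1 - exp (-1)) * q) := by rw [← exp_add]; ring_nf
    _ ≤ exp 0 := exp_le_exp.2 (by nlinarith)
    _ = 1 := exp_zero

end Real

section HalfCompensatedExp

variable {Ω : Type*} {m0 : MeasurableSpace Ω} {μ : Measure Ω} {ℱ : Filtration ℕ m0}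
  {X p : ℕ → Ω → ℝ}

noncomputable def halfCompensatedExp (X p : ℕ → Ω → ℝ) (n : ℕ) (ω : Ω) : ℝ :=
  Real.exp ((∑ t ∈ Icc 1 n, p t ω) / 2 - ∑ t ∈ Icc 1 n, X t ω)

lemma halfCompensatedExp_zero : halfCompensatedExp X p 0 = 1 := by
  funext ω
  simp [halfCompensatedExp]

lemma halfCompensatedExp_pos (n : ℕ) (ω : Ω) : 0 < halfCompensatedExp X p n ω :=
  Real.exp_pos _

lemma halfCompensatedExp_succ (n : ℕ) (ω : Ω) :
    halfCompensatedExp X p (n + 1) ω =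
      halfCompensatedExp X p n ω * Real.exp (p (n + 1) ω / 2) * Real.exp (-X (n + 1) ω) := by
  simp only [halfCompensatedExp, sum_Icc_succ_top (Nat.le_add_left 1 n), ← Real.exp_add]
  ring_nf

lemma halfCompensatedExp_succ_le {n : ℕ} {ω : Ω} (hX : X (n + 1) ω ∈ Set.Icc (0 : ℝ) 1) :
    halfCompensatedExp X p (n + 1) ω ≤ halfCompensatedExp X p n ω *
      Real.exp (p (n + 1) ω / 2) * (1 - (1 - Real.exp (-1)) * X (n + 1) ω) := by
  rw [halfCompensatedExp_succ]
  exact mul_le_mul_of_nonneg_left (Real.exp_neg_le_one_sub_mul hX)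
    (mul_pos (halfCompensatedExp_pos n ω) (Real.exp_pos _)).le

lemma halfCompensatedExp_le_exp {n : ℕ} {ω : Ω} (hp : ∀ t ∈ Icc 1 n, p t ω ≤ 1)
    (hX : ∀ t ∈ Icc 1 n, 0 ≤ X t ω) :
    halfCompensatedExp X p n ω ≤ Real.exp (n / 2) := by
  have hp_sum : ∑ t ∈ Icc 1 n, p t ω ≤ n := by simpa using sum_le_sum hp
  have hX_sum : 0 ≤ ∑ t ∈ Icc 1 n, X t ω := sum_nonneg hX
  exact Real.exp_le_exp.2 (by linarith)

lemma stronglyAdapted_halfCompensatedExp (hXa : Adapted ℱ X)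
    (hp : ∀ i, 1 ≤ i → StronglyMeasurable[ℱ (i - 1)] (p i)) :
    StronglyAdapted ℱ (halfCompensatedExp X p) := by
  intro n
  have hp_sum : Measurable[ℱ n] fun ω => ∑ t ∈ Icc 1 n, p t ω :=
    measurable_sum _ fun t ht => ((hp t (mem_Icc.1 ht).1).mono
      (ℱ.mono ((Nat.sub_le t 1).trans (mem_Icc.1 ht).2))).measurable
  have hX_sum : Measurable[ℱ n] fun ω => ∑ t ∈ Icc 1 n, X t ω :=
    measurable_sum _ fun t ht => (hXa t).mono (ℱ.mono (mem_Icc.1 ht).2) le_rfl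
  exact (Real.measurable_exp.comp ((hp_sum.div_const 2).sub hX_sum)).stronglyMeasurable

lemma integrable_halfCompensatedExp [IsFiniteMeasure μ] (hXa : Adapted ℱ X)
    (hp : ∀ i, 1 ≤ i → StronglyMeasurable[ℱ (i - 1)] (p i)) (hX0 : ∀ i ω, 0 ≤ X i ω)
    (hp1 : ∀ i, 1 ≤ i → ∀ᵐ ω ∂μ, p i ω ≤ 1) (n : ℕ) :
    Integrable (halfCompensatedExp X p n) μ := by
  refine .of_bound
    ((stronglyAdapted_halfCompensatedExp hXa hp n).mono (ℱ.le n)).aestronglyMeasurable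
    (Real.exp (n / 2)) ?_
  have hp1_all : ∀ᵐ ω ∂μ, ∀ t ∈ Icc 1 n, p t ω ≤ 1 :=
    (Filter.eventually_all_finset _).2 fun t ht => hp1 t (mem_Icc.1 ht).1
  filter_upwards [hp1_all] with ω hω
  rw [Real.norm_of_nonneg (halfCompensatedExp_pos n ω).le]
  exact halfCompensatedExp_le_exp hω fun t _ => hX0 t ω

lemma ae_mem_Icc_of_condExp_eq [IsFiniteMeasure μ] (hX : ∀ i ω, X i ω ∈ Set.Icc (0 : ℝ) 1)
    (hXa : Adapted ℱ X) (hcond : ∀ i, 1 ≤ i → μ[X i | ℱ (i - 1)] =ᵐ[μ] p i) {i : ℕ}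
    (hi : 1 ≤ i) : ∀ᵐ ω ∂μ, p i ω ∈ Set.Icc (0 : ℝ) 1 := by
  have hX_int : Integrable (X i) μ :=
    .of_mem_Icc 0 1 ((hXa i).mono (ℱ.le i) le_rfl).aemeasurable (ae_of_all _ (hX i))
  filter_upwards [ae_condExp_mem_Icc (ℱ.le (i - 1)) hX_int (ae_of_all _ (hX i)), hcond i hi]
    with ω h_mem h_eq
  rwa [← h_eq]

lemma condExp_halfCompensatedExp_succ_le [IsFiniteMeasure μ]
    (hX : ∀ i ω, X i ω ∈ Set.Icc (0 : ℝ) 1) (hXa : Adapted ℱ X)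
    (hp : ∀ i, 1 ≤ i → StronglyMeasurable[ℱ (i - 1)] (p i))
    (hcond : ∀ i, 1 ≤ i → μ[X i | ℱ (i - 1)] =ᵐ[μ] p i) (n : ℕ) :
    μ[halfCompensatedExp X p (n + 1) | ℱ n] ≤ᵐ[μ] halfCompensatedExp X p n := by
  have hp01 := fun i (hi : 1 ≤ i) => ae_mem_Icc_of_condExp_eq hX hXa hcond hi
  set c := 1 - Real.exp (-1)
  set G : Ω → ℝ := fun ω => halfCompensatedExp X p n ω * Real.exp (p (n + 1) ω / 2)
  set Y : Ω → ℝ := fun ω => 1 - c * X (n + 1) ω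
  have hM_int := integrable_halfCompensatedExp hXa hp (fun i ω => (hX i ω).1)
    (fun i hi => (hp01 i hi).mono fun _ h => h.2)
  have hp_sm : StronglyMeasurable[ℱ n] (p (n + 1)) := hp (n + 1) n.succ_pos
  have hG_sm : StronglyMeasurable[ℱ n] G :=
    (stronglyAdapted_halfCompensatedExp hXa hp n).mul
      (hp_sm.measurable.div_const 2).exp.stronglyMeasurable
  have hG_int : Integrable G μ := by
    refine (hM_int n).mul_bdd
      ((hp_sm.measurable.div_const 2).exp.mono (ℱ.le n) le_rfl).aestronglyMeasurable
      (c := Real.exp (1 / 2)) ?_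
    filter_upwards [hp01 (n + 1) n.succ_pos] with ω hω
    rw [Real.norm_of_nonneg (Real.exp_pos _).le]
    exact Real.exp_le_exp.2 (by linarith [hω.2])
  have hX_int : Integrable (X (n + 1)) μ :=
    .of_mem_Icc 0 1 ((hXa (n + 1)).mono (ℱ.le _) le_rfl).aemeasurable (ae_of_all _ (hX _))
  have hY_int : Integrable Y μ := (integrable_const 1).sub (hX_int.const_mul c)
  have hc : c ∈ Set.Icc (0 : ℝ) 1 := by
    constructor <;> linarith [Real.exp_pos (-1), Real.exp_neg_one_lt_half]
  have hGY_int : Integrable (G * Y) μ := by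
    refine hG_int.mul_bdd hY_int.aestronglyMeasurable (c := 1) (ae_of_all _ fun ω => ?_)
    have hcX := unitInterval.mul_mem hc (hX (n + 1) ω)
    exact abs_sub_le_of_nonneg_of_le zero_le_one le_rfl hcX.1 hcX.2
  have h_le : halfCompensatedExp X p (n + 1) ≤ᵐ[μ] G * Y :=
    ae_of_all _ fun ω => halfCompensatedExp_succ_le (hX _ ω)
  have hY_cond : μ[Y | ℱ n] =ᵐ[μ] fun ω => 1 - c * p (n + 1) ω := by
    filter_upwards [condExp_const_sub_mul (ℱ.le n) hX_int 1 c, hcond (n + 1) n.succ_pos]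
      with ω h_Y h_X
    simp only [Nat.add_sub_cancel] at h_X
    rw [h_Y, h_X]
  filter_upwards [condExp_mono (m := ℱ n) (hM_int (n + 1)) hGY_int h_le,
    condExp_mul_of_stronglyMeasurable_left hG_sm hGY_int hY_int, hY_cond,
    hp01 (n + 1) n.succ_pos] with ω h_mono h_pull h_Y hω
  calc μ[halfCompensatedExp X p (n + 1) | ℱ n] ω ≤ μ[G * Y | ℱ n] ω := h_mono
    _ = halfCompensatedExp X p n ω * (Real.exp (p (n + 1) ω / 2) * (1 - c * p (n + 1) ω)) := by
      rw [h_pull, Pi.mul_apply, h_Y]; ring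
    _ ≤ halfCompensatedExp X p n ω := mul_le_of_le_one_right (halfCompensatedExp_pos n ω).le
      (Real.exp_half_mul_one_sub_le_one hω.1)

theorem supermartingale_halfCompensatedExp [IsFiniteMeasure μ]
    (hX : ∀ i ω, X i ω ∈ Set.Icc (0 : ℝ) 1) (hXa : Adapted ℱ X)
    (hp : ∀ i, 1 ≤ i → StronglyMeasurable[ℱ (i - 1)] (p i))
    (hcond : ∀ i, 1 ≤ i → μ[X i | ℱ (i - 1)] =ᵐ[μ] p i) :
    Supermartingale (halfCompensatedExp X p) ℱ μ :=
  supermartingale_nat (stronglyAdapted_halfCompensatedExp hXa hp)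
    (integrable_halfCompensatedExp hXa hp (fun i ω => (hX i ω).1)
      (fun _ hi => (ae_mem_Icc_of_condExp_eq hX hXa hcond hi).mono fun _ h => h.2))
    (condExp_halfCompensatedExp_succ_le hX hXa hp hcond)

end HalfCompensatedExp

theorem stmt_8_general {Ω : Type*} {m0 : MeasurableSpace Ω} (μ : Measure Ω)
    [IsProbabilityMeasure μ] (ℱ : Filtration ℕ m0)
    (X : ℕ → Ω → ℝ) (p : ℕ → Ω → ℝ)
    (h01 : ∀ i ω, X i ω = 0 ∨ X i ω = 1)
    (hadapted : Adapted ℱ X)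
    (hpred : ∀ i : ℕ, 1 ≤ i → StronglyMeasurable[ℱ (i - 1)] (p i))
    (hcond : ∀ i : ℕ, 1 ≤ i → μ[X i | ℱ (i - 1)] =ᵐ[μ] p i)
    (W : ℝ) :
    μ {ω | ∃ n : ℕ, 1 ≤ n ∧
        ∑ t ∈ Finset.Icc 1 n, X t ω < (∑ t ∈ Finset.Icc 1 n, p t ω) / 2 - W}
      ≤ ENNReal.ofReal (Real.exp (-W)) := by
  have hX : ∀ i ω, X i ω ∈ Set.Icc (0 : ℝ) 1 := fun i ω => by
    rcases h01 i ω with h | h <;> simp [h]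
  have h_super := supermartingale_halfCompensatedExp hX hadapted hpred hcond
  calc μ {ω | ∃ n : ℕ, 1 ≤ n ∧
        ∑ t ∈ Finset.Icc 1 n, X t ω < (∑ t ∈ Finset.Icc 1 n, p t ω) / 2 - W}
      ≤ μ {ω | ∃ n, Real.exp W ≤ halfCompensatedExp X p n ω} :=
        measure_mono fun ω ⟨n, _, hn⟩ => ⟨n, Real.exp_le_exp.2 (by linarith)⟩
    _ ≤ ENNReal.ofReal ((∫ ω, halfCompensatedExp X p 0 ω ∂μ) / Real.exp W) :=
        h_super.measure_exists_ge_le (fun n ω => (halfCompensatedExp_pos n ω).le) (Real.exp_pos W)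
    _ = ENNReal.ofReal (Real.exp (-W)) := by simp [halfCompensatedExp_zero, Real.exp_neg]

theorem stmt_8 {Ω : Type*} {m0 : MeasurableSpace Ω} (μ : Measure Ω)
    [IsProbabilityMeasure μ] (ℱ : Filtration ℕ m0)
    (X : ℕ → Ω → ℝ) (p : ℕ → Ω → ℝ)
    (h01 : ∀ i ω, X i ω = 0 ∨ X i ω = 1)
    (hadapted : Adapted ℱ X)
    (hpred : ∀ i : ℕ, 1 ≤ i → StronglyMeasurable[ℱ (i - 1)] (p i))
    (hcond : ∀ i : ℕ, 1 ≤ i → μ[X i | ℱ (i - 1)] =ᵐ[μ] p i)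
    (W : ℝ) (hW : 0 < W) :
    μ {ω | ∃ n : ℕ, 1 ≤ n ∧
        ∑ t ∈ Finset.Icc 1 n, X t ω < (∑ t ∈ Finset.Icc 1 n, p t ω) / 2 - W}
      ≤ ENNReal.ofReal (Real.exp (-W)) :=
  stmt_8_general μ ℱ X p h01 hadapted hpred hcond W
end

section
/- Let $\{\mathcal{F}_i\}$ be a filtration, $X_1, \ldots, X_n$ Bernoulli random variables with $\mathbb{P}(X_i = 1 \mid \mathcal{F}_{i-1}) = P_i$ ($P_i$ being $\mathcal{F}_{i-1}$-measurable). Then the process $M_n = \exp\left(\sum_{t=1}^n (-X_t + P_t/2)\right)$ is a supermartingale with respect to $\{\mathcal{F}_n\}$. -/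
/-!
Since `X ∈ {0, 1}`, `exp (-X) = 1 - (1 - e⁻¹) X` is affine in `X`, so its conditional expectation
given `ℱ (i - 1)` is exactly `1 - (1 - e⁻¹) P`. As `1 - e⁻¹ ≥ 1/2` and `1 - x ≤ exp (-x)`, this is
at most `exp (-P / 2)`, which is precisely the one-step supermartingale inequality for `M`.
-/

open MeasureTheory Filter

lemma Real.exp_mul_of_eq_zero_or_eq_one {x : ℝ} (hx : x = 0 ∨ x = 1) (a : ℝ) :
    Real.exp (a * x) = 1 + (Real.exp a - 1) * x := by
  rcases hx with rfl | rfl <;> simp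

lemma Real.exp_half_mul_one_sub_le_one_s9 {q : ℝ} (hq : 0 ≤ q) :
    Real.exp (q / 2) * (1 + (Real.exp (-1) - 1) * q) ≤ 1 := by
  have hexp : Real.exp (-1) ≤ 1 / 2 := by
    rw [Real.exp_neg, inv_le_comm₀ (Real.exp_pos 1) (by norm_num)]
    linarith [Real.add_one_le_exp (1 : ℝ)]
  calc Real.exp (q / 2) * (1 + (Real.exp (-1) - 1) * q)
      ≤ Real.exp (q / 2) * Real.exp ((Real.exp (-1) - 1) * q) := by
        gcongr
        linarith [Real.add_one_le_exp ((Real.exp (-1) - 1) * q)]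
    _ = Real.exp ((Real.exp (-1) - 1 / 2) * q) := by rw [← Real.exp_add]; ring_nf
    _ ≤ 1 := Real.exp_le_one_iff.2 (mul_nonpos_of_nonpos_of_nonneg (by linarith) hq)

section

variable {Ω : Type*} {m m0 : MeasurableSpace Ω} {μ : Measure Ω} [IsFiniteMeasure μ]

lemma integrable_exp_of_ae_le {f : Ω → ℝ} (hf : AEStronglyMeasurable f μ) {C : ℝ}
    (hC : ∀ᵐ ω ∂μ, f ω ≤ C) : Integrable (fun ω => Real.exp (f ω)) μ := by
  refine .of_bound (Real.continuous_exp.comp_aestronglyMeasurable hf) (Real.exp C) ?_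
  filter_upwards [hC] with ω hω
  rw [Real.norm_eq_abs, abs_of_pos (Real.exp_pos _)]
  exact Real.exp_le_exp.2 hω

lemma ae_mem_Icc_condExp (hm : m ≤ m0) {f : Ω → ℝ} (hf : Integrable f μ) {a b : ℝ}
    (hab : ∀ᵐ ω ∂μ, f ω ∈ Set.Icc a b) : ∀ᵐ ω ∂μ, μ[f | m] ω ∈ Set.Icc a b := by
  have hlow : μ[fun _ => a | m] ≤ᵐ[μ] μ[f | m] :=
    condExp_mono (integrable_const a) hf (hab.mono fun _ h => h.1)
  have hup : μ[f | m] ≤ᵐ[μ] μ[fun _ => b | m] :=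
    condExp_mono hf (integrable_const b) (hab.mono fun _ h => h.2)
  rw [condExp_const hm] at hlow hup
  filter_upwards [hlow, hup] with ω h₁ h₂ using ⟨h₁, h₂⟩

lemma ae_mem_Icc_of_condExp_ae_eq (hm : m ≤ m0) {X P : Ω → ℝ} (hX : ∀ ω, X ω = 0 ∨ X ω = 1)
    (hXint : Integrable X μ) (hXP : μ[X | m] =ᵐ[μ] P) : ∀ᵐ ω ∂μ, P ω ∈ Set.Icc 0 1 := by
  have hXIcc : ∀ᵐ ω ∂μ, X ω ∈ Set.Icc (0 : ℝ) 1 :=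
    .of_forall fun ω => by rcases hX ω with h | h <;> simp [h]
  filter_upwards [hXP, ae_mem_Icc_condExp hm hXint hXIcc] with ω hω hIcc
  rwa [← hω]

lemma condExp_exp_mul_of_eq_zero_or_eq_one (hm : m ≤ m0) {X : Ω → ℝ}
    (hX : ∀ ω, X ω = 0 ∨ X ω = 1) (hXint : Integrable X μ) (a : ℝ) :
    μ[fun ω => Real.exp (a * X ω) | m] =ᵐ[μ] fun ω => 1 + (Real.exp a - 1) * μ[X | m] ω := by
  have haffine : (fun ω => Real.exp (a * X ω)) = (fun _ => (1 : ℝ)) + (Real.exp a - 1) • X := by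
    funext ω
    exact Real.exp_mul_of_eq_zero_or_eq_one (hX ω) a
  rw [haffine]
  filter_upwards [condExp_add (integrable_const 1) (hXint.smul (Real.exp a - 1)) m,
    condExp_smul (Real.exp a - 1) X m] with ω hsum hsmul
  rw [hsum, Pi.add_apply, hsmul, condExp_const hm]
  rfl

lemma condExp_exp_neg_add_half_le_one (hm : m ≤ m0) {X P : Ω → ℝ}
    (hX : ∀ ω, X ω = 0 ∨ X ω = 1) (hXint : Integrable X μ) (hP : StronglyMeasurable[m] P)
    (hXP : μ[X | m] =ᵐ[μ] P) :
    μ[fun ω => Real.exp (-X ω + P ω / 2) | m] ≤ᵐ[μ] 1 := by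
  have hPIcc := ae_mem_Icc_of_condExp_ae_eq hm hX hXint hXP
  have hexpX : Integrable (fun ω => Real.exp (-1 * X ω)) μ :=
    integrable_exp_of_ae_le (hXint.aestronglyMeasurable.const_mul _) (C := 0)
      (.of_forall fun ω => by rcases hX ω with h | h <;> simp [h])
  have hexpP : StronglyMeasurable[m] fun ω => Real.exp (P ω / 2) :=
    Real.continuous_exp.comp_stronglyMeasurable (hP.mul_const 2⁻¹)
  have hsplit : (fun ω => Real.exp (-X ω + P ω / 2)) =
      (fun ω => Real.exp (P ω / 2)) * fun ω => Real.exp (-1 * X ω) := by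
    funext ω
    rw [Pi.mul_apply, ← Real.exp_add]
    ring_nf
  have hint : Integrable (fun ω => Real.exp (-X ω + P ω / 2)) μ :=
    integrable_exp_of_ae_le (hXint.aestronglyMeasurable.neg.add
      ((hP.mono hm).aestronglyMeasurable.mul_const 2⁻¹)) (C := 1 / 2) (by
        filter_upwards [hPIcc] with ω hω
        rcases hX ω with h | h <;> simp only [h] <;> linarith [hω.2])
  rw [hsplit] at hint ⊢
  filter_upwards [condExp_mul_of_stronglyMeasurable_left hexpP hint hexpX,
    condExp_exp_mul_of_eq_zero_or_eq_one hm hX hXint (-1), hXP, hPIcc] with ω hpull hexp hω hPω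
  rw [hpull, Pi.mul_apply, hexp, hω]
  exact Real.exp_half_mul_one_sub_le_one_s9 hPω.1

lemma supermartingale_exp_sum {ℱ : Filtration ℕ m0} {D : ℕ → Ω → ℝ} {C : ℝ}
    (hD : ∀ t, 1 ≤ t → StronglyMeasurable[ℱ t] (D t)) (hDC : ∀ t, 1 ≤ t → ∀ᵐ ω ∂μ, D t ω ≤ C)
    (hstep : ∀ n, μ[fun ω => Real.exp (D (n + 1) ω) | ℱ n] ≤ᵐ[μ] 1) :
    Supermartingale (fun n ω => Real.exp (∑ t ∈ Finset.Icc 1 n, D t ω)) ℱ μ := by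
  have hsum : StronglyAdapted ℱ fun n ω => ∑ t ∈ Finset.Icc 1 n, D t ω := fun n =>
    Finset.stronglyMeasurable_fun_sum _
      fun t ht => (hD t (Finset.mem_Icc.1 ht).1).mono (ℱ.mono (Finset.mem_Icc.1 ht).2)
  have hmeas : StronglyAdapted ℱ fun n ω => Real.exp (∑ t ∈ Finset.Icc 1 n, D t ω) := fun n =>
    Real.continuous_exp.comp_stronglyMeasurable (hsum n)
  have hint : ∀ n, Integrable (fun ω => Real.exp (∑ t ∈ Finset.Icc 1 n, D t ω)) μ := by
    intro n
    refine integrable_exp_of_ae_le ((hsum n).mono (ℱ.le n)).aestronglyMeasurable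
      (C := ∑ _t ∈ Finset.Icc 1 n, C) ?_
    have hall : ∀ᵐ ω ∂μ, ∀ t ∈ Finset.Icc 1 n, D t ω ≤ C :=
      (Finset.eventually_all _).2 fun t ht => hDC t (Finset.mem_Icc.1 ht).1
    filter_upwards [hall] with ω hω using Finset.sum_le_sum hω
  refine supermartingale_nat hmeas hint fun n => ?_
  have hn : 1 ≤ n + 1 := Nat.le_add_left 1 n
  have hsplit : (fun ω => Real.exp (∑ t ∈ Finset.Icc 1 (n + 1), D t ω)) =
      (fun ω => Real.exp (∑ t ∈ Finset.Icc 1 n, D t ω)) * fun ω => Real.exp (D (n + 1) ω) := by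
    funext ω
    rw [Finset.sum_Icc_succ_top hn, Real.exp_add, Pi.mul_apply]
  have hlast : Integrable (fun ω => Real.exp (D (n + 1) ω)) μ :=
    integrable_exp_of_ae_le ((hD (n + 1) hn).mono (ℱ.le _)).aestronglyMeasurable (hDC (n + 1) hn)
  have hint' := hint (n + 1)
  rw [hsplit] at hint' ⊢
  filter_upwards [condExp_mul_of_stronglyMeasurable_left (hmeas n) hint' hlast, hstep n]
    with ω hpull hω
  rw [hpull, Pi.mul_apply]
  exact mul_le_of_le_one_right (Real.exp_pos _).le hω

end

theorem stmt_9 {Ω : Type*} {m0 : MeasurableSpace Ω} (μ : Measure Ω)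
    [IsProbabilityMeasure μ] (ℱ : Filtration ℕ m0)
    (X : ℕ → Ω → ℝ) (p : ℕ → Ω → ℝ)
    (h01 : ∀ i ω, X i ω = 0 ∨ X i ω = 1)
    (hadapted : Adapted ℱ X)
    (hpred : ∀ i : ℕ, 1 ≤ i → StronglyMeasurable[ℱ (i - 1)] (p i))
    (hcond : ∀ i : ℕ, 1 ≤ i → μ[X i | ℱ (i - 1)] =ᵐ[μ] p i) :
    Supermartingale
      (fun n ω => Real.exp (∑ t ∈ Finset.Icc 1 n, (-(X t ω) + p t ω / 2)))
      ℱ μ := by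
  have hXint : ∀ i, Integrable (X i) μ := fun i =>
    .of_bound ((hadapted i).mono (ℱ.le i) le_rfl).aestronglyMeasurable 1
      (.of_forall fun ω => by rcases h01 i ω with h | h <;> simp [h])
  have hp1 : ∀ i, 1 ≤ i → ∀ᵐ ω ∂μ, p i ω ≤ 1 := fun i hi =>
    (ae_mem_Icc_of_condExp_ae_eq (ℱ.le _) (h01 i) (hXint i) (hcond i hi)).mono fun _ h => h.2
  refine supermartingale_exp_sum (C := 1 / 2) (fun t ht => ?_) (fun t ht => ?_) fun n => ?_
  · exact (hadapted t).stronglyMeasurable.neg.add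
      (((hpred t ht).mono (ℱ.mono (Nat.sub_le t 1))).mul_const 2⁻¹)
  · filter_upwards [hp1 t ht] with ω hω
    rcases h01 t ω with h | h <;> simp only [h] <;> linarith
  · have hn : 1 ≤ n + 1 := Nat.le_add_left 1 n
    exact condExp_exp_neg_add_half_le_one (ℱ.le n) (h01 (n + 1)) (hXint (n + 1))
      (by simpa using hpred (n + 1) hn) (by simpa using hcond (n + 1) hn)
end

section
/- Suppose a sequence of per-episode optimality gaps $\Delta_k \in [0, H]$ satisfies: for every $\epsilon \in (0, H]$, the number of episodes $k$ with $\Delta_k > \epsilon$ is at most $g(\epsilon) = \frac{C_1}{\epsilon}\left(\ln\frac{C_3}{\epsilon}\right)^k + \frac{C_2}{\epsilon^2}\left(\ln\frac{C_3}{\epsilon}\right)^{2k}$ for constants $C_1 \geq C_2 \geq 2$, $C_3 \geq \max\{H, e\}$, and fixed integer $k \geq 0$. Then the cumulative regret $R(T) = \sum_{j=1}^T \Delta_j$ satisfies $R(T) \leq T\epsilon_{\min} + \int_{\epsilon_{\min}}^H g(\epsilon)\,d\epsilon$ for any $\epsilon_{\min} \in (0, H]$ with $g(\epsilon_{\min})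 \leq T$, and consequently $R(T) = O\left(\left(\sqrt{C_2 T} + C_1\right)\operatorname{polylog}(T, C_3, C_1, H)\right)$ for all $T$. -/
/-!
Layer cake: `Δ_j - εmin ≤ ∫_{εmin}^H 1[ε < Δ_j] dε` for `Δ_j ≤ H`, so summing over `j ≤ T` gives
`∑ Δ_j ≤ T εmin + ∫_{εmin}^H #{j | Δ_j > ε} dε ≤ T εmin + ∫_{εmin}^H g`.

For the rate, bound the logarithm on `[εmin, H]` by some `L ≥ log (C₃ / εmin)`; the remaining
integrals give `∫_{εmin}^H g ≤ C₁ L^p log (H / εmin) + C₂ L^{2p} / εmin`. The choice `εmin = √(C₂ T) / T`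
balances `T εmin` and `C₂ / εmin` at `√(C₂ T)`, and `L ≤ log (C₃ T)`; when this `εmin` exceeds `H`
the trivial bound `T H < √(C₂ T)` applies instead. Hence the regret is at most
`(√(C₂ T) + C₁) · 2 log (C₃ T)^{2p+1}`. Finally `log (T C₃ C₁ H)` differs from `log (C₃ T)` by a
constant, so an even power of it dominates this up to an additive constant.
-/

/-- The mistake bound `g ε = (C₁/ε) (ln (C₃/ε))^p + (C₂/ε²) (ln (C₃/ε))^{2p}`. -/
noncomputable def mistakeBound (C1 C2 C3 : ℝ) (p : ℕ) (ε : ℝ) : ℝ :=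
  C1 / ε * (Real.log (C3 / ε)) ^ p + C2 / ε ^ 2 * (Real.log (C3 / ε)) ^ (2 * p)

open Real MeasureTheory Set
open scoped Finset

theorem integral_indicator_Iio_one {a b x : ℝ} (hab : a ≤ b) (hxb : x ≤ b) :
    ∫ ε in a..b, (Iio x).indicator 1 ε = max (x - a) 0 := by
  have hset : Ioc a b ∩ Iio x = Ioo a x := by
    ext y; simp only [mem_inter_iff, mem_Ioc, mem_Iio, mem_Ioo]; grind
  rw [intervalIntegral.integral_of_le hab, setIntegral_indicator measurableSet_Iio, hset]
  simp only [Pi.one_apply, setIntegral_const, smul_eq_mul, mul_one, volume_real_Ioo]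

theorem intervalIntegrable_indicator_Iio_one (a b x : ℝ) :
    IntervalIntegrable ((Iio x).indicator (1 : ℝ → ℝ)) volume a b := by
  rw [intervalIntegrable_iff]
  exact (integrableOn_const measure_Ioc_lt_top.ne).indicator measurableSet_Iio

theorem sum_le_card_mul_add_integral_card_lt {ι : Type*} (s : Finset ι) (f : ι → ℝ) {a b : ℝ}
    (hab : a ≤ b) (hf : ∀ i ∈ s, f i ≤ b) :
    ∑ i ∈ s, f i ≤ #s * a + ∫ ε in a..b, (#{i ∈ s | ε < f i} : ℝ) := by
  have hcount : (fun ε => (#{i ∈ s | ε < f i} : ℝ)) =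
      fun ε => ∑ i ∈ s, (Iio (f i)).indicator 1 ε := by
    ext ε
    simp only [indicator_apply, mem_Iio, Pi.one_apply, Finset.sum_boole]
  rw [hcount, intervalIntegral.integral_finsetSum fun i _ =>
      intervalIntegrable_indicator_Iio_one a b (f i),
    ← sub_le_iff_le_add', ← nsmul_eq_mul, ← Finset.sum_const, ← Finset.sum_sub_distrib]
  refine Finset.sum_le_sum fun i hi => ?_
  rw [integral_indicator_Iio_one hab (hf i hi)]
  exact le_max_left _ _

theorem continuousOn_mistakeBound (C1 C2 : ℝ) {C3 : ℝ} (hC3 : C3 ≠ 0) (p : ℕ) :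
    ContinuousOn (mistakeBound C1 C2 C3 p) (Ioi 0) := by
  have hne : ∀ ε ∈ Ioi (0 : ℝ), ε ≠ 0 := fun ε hε => (mem_Ioi.1 hε).ne'
  have hlog : ContinuousOn (fun ε => log (C3 / ε)) (Ioi 0) :=
    (continuousOn_const.div continuousOn_id hne).log fun ε hε => div_ne_zero hC3 (hne ε hε)
  exact ((continuousOn_const.div continuousOn_id hne).mul (hlog.pow p)).add
    ((continuousOn_const.div (continuousOn_id.pow 2) fun ε hε => pow_ne_zero 2 (hne ε hε)).mul
      (hlog.pow (2 * p)))

theorem intervalIntegrable_mistakeBound (C1 C2 : ℝ) {C3 : ℝ} (hC3 : C3 ≠ 0) (p : ℕ) {a b : ℝ}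
    (ha : 0 < a) (hb : 0 < b) : IntervalIntegrable (mistakeBound C1 C2 C3 p) volume a b :=
  ((continuousOn_mistakeBound C1 C2 hC3 p).mono fun _ hε =>
    (lt_min ha hb).trans_le hε.1).intervalIntegrable

theorem sum_le_mul_add_integral_mistakeBound {C1 C2 C3 H : ℝ} (hC3 : C3 ≠ 0) {p : ℕ} (T : ℕ)
    {Δ : ℕ → ℝ} (hΔ : ∀ j, Δ j ≤ H)
    (hmistake : ∀ ε ∈ Ioc 0 H, (#{j ∈ Finset.Icc 1 T | Δ j > ε} : ℝ) ≤ mistakeBound C1 C2 C3 p ε)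
    {εmin : ℝ} (hε : εmin ∈ Ioc 0 H) :
    ∑ j ∈ Finset.Icc 1 T, Δ j ≤ T * εmin + ∫ ε in εmin..H, mistakeBound C1 C2 C3 p ε := by
  have hcount_anti : Antitone fun ε => (#{j ∈ Finset.Icc 1 T | ε < Δ j} : ℝ) := fun _ _ hxy =>
    Nat.cast_le.2 <| Finset.card_le_card <| Finset.monotone_filter_right _ fun _ _ hj =>
      hxy.trans_lt hj
  calc ∑ j ∈ Finset.Icc 1 T, Δ j
      ≤ T * εmin + ∫ ε in εmin..H, (#{j ∈ Finset.Icc 1 T | ε < Δ j} : ℝ) := by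
        simpa using sum_le_card_mul_add_integral_card_lt (Finset.Icc 1 T) Δ hε.2 fun j _ => hΔ j
    _ ≤ T * εmin + ∫ ε in εmin..H, mistakeBound C1 C2 C3 p ε := by
        gcongr
        refine intervalIntegral.integral_mono_on hε.2 hcount_anti.intervalIntegrable
          (intervalIntegrable_mistakeBound C1 C2 hC3 p hε.1 (hε.1.trans_le hε.2)) fun ε hε' => ?_
        exact hmistake ε ⟨hε.1.trans_le hε'.1, hε'.2⟩

theorem integral_mistakeBound_le {C1 C2 C3 L a b : ℝ} (p : ℕ) (hC1 : 0 ≤ C1) (hC2 : 0 ≤ C2)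
    (ha : 0 < a) (hab : a ≤ b) (hbC3 : b ≤ C3) (hL : log (C3 / a) ≤ L) :
    ∫ ε in a..b, mistakeBound C1 C2 C3 p ε ≤ C1 * L ^ p * log (b / a) + C2 * L ^ (2 * p) / a := by
  have hb : 0 < b := ha.trans_le hab
  have hC3 : 0 < C3 := hb.trans_le hbC3
  have h0 : (0 : ℝ) ∉ uIcc a b := notMem_uIcc_of_lt ha hb
  have hne : ∀ ε ∈ uIcc a b, ε ≠ 0 := fun ε hε h => h0 (h ▸ hε)
  have hinv : IntervalIntegrable (fun ε : ℝ => ε⁻¹) volume a b :=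
    (continuousOn_id.inv₀ hne).intervalIntegrable
  have hinv_sq : IntervalIntegrable (fun ε : ℝ => ε ^ (-2 : ℤ)) volume a b :=
    (continuousOn_id.zpow₀ (-2) fun ε hε => Or.inl (hne ε hε)).intervalIntegrable
  have hpointwise : ∀ ε ∈ Icc a b,
      mistakeBound C1 C2 C3 p ε ≤ C1 * L ^ p * ε⁻¹ + C2 * L ^ (2 * p) * ε ^ (-2 : ℤ) := by
    rintro ε ⟨haε, hεb⟩
    have hε : 0 < ε := ha.trans_le haε
    have hlog_nonneg : 0 ≤ log (C3 / ε) := log_nonneg <| (one_le_div hε).2 (hεb.trans hbC3)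
    have hlog_le : log (C3 / ε) ≤ L :=
      (log_le_log (div_pos hC3 hε) (div_le_div_of_nonneg_left hC3.le ha haε)).trans hL
    calc mistakeBound C1 C2 C3 p ε ≤ C1 / ε * L ^ p + C2 / ε ^ 2 * L ^ (2 * p) := by
          unfold mistakeBound; gcongr
      _ = C1 * L ^ p * ε⁻¹ + C2 * L ^ (2 * p) * ε ^ (-2 : ℤ) := by
          rw [zpow_neg, zpow_two, ← sq]; ring
  calc ∫ ε in a..b, mistakeBound C1 C2 C3 p ε
      ≤ ∫ ε in a..b, (C1 * L ^ p * ε⁻¹ + C2 * L ^ (2 * p) * ε ^ (-2 : ℤ)) :=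
        intervalIntegral.integral_mono_on hab
          (intervalIntegrable_mistakeBound C1 C2 hC3.ne' p ha hb)
          ((hinv.const_mul _).add (hinv_sq.const_mul _)) hpointwise
    _ = C1 * L ^ p * log (b / a) + C2 * L ^ (2 * p) * (a⁻¹ - b⁻¹) := by
        rw [intervalIntegral.integral_add (hinv.const_mul _) (hinv_sq.const_mul _),
          intervalIntegral.integral_const_mul, intervalIntegral.integral_const_mul, integral_inv h0,
          integral_zpow (Or.inr ⟨by norm_num, h0⟩)]
        rw [show (-2 : ℤ) + 1 = -1 by norm_num, zpow_neg_one, zpow_neg_one]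
        push_cast
        ring
    _ ≤ C1 * L ^ p * log (b / a) + C2 * L ^ (2 * p) / a := by
        have hL0 : 0 ≤ L := (log_nonneg <| (one_le_div ha).2 (hab.trans hbC3)).trans hL
        rw [div_eq_mul_inv (C2 * L ^ (2 * p))]
        gcongr
        exact sub_le_self _ (inv_nonneg.2 hb.le)

theorem exists_mul_pow_le_add_pow_two_mul {k : ℝ} (hk : 0 ≤ k) (c : ℝ) (n : ℕ) :
    ∃ C, 0 ≤ C ∧ ∀ x, 0 ≤ x → k * x ^ n ≤ (x + c) ^ (2 * (n + 1)) + C := by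
  set K := max k 1
  set R := max 1 (K - 2 * c)
  refine ⟨k * R ^ n, by positivity, fun x hx => ?_⟩
  have hsq_nonneg : 0 ≤ (x + c) ^ (2 * (n + 1)) := (even_two_mul _).pow_nonneg _
  rcases le_total x R with hxR | hRx
  · have : k * x ^ n ≤ k * R ^ n := by gcongr
    linarith
  -- beyond `R`, `(x + c)² - K x = x (x + 2c - K) + c² ≥ 0`
  have hx1 : 1 ≤ x := (le_max_left _ _).trans hRx
  have hK1 : 1 ≤ K := le_max_right _ _
  have hsq : K * x ≤ (x + c) ^ 2 := by
    nlinarith [(le_max_right 1 (K - 2 * c)).trans hRx, sq_nonneg c]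
  have hCR : 0 ≤ k * R ^ n := by positivity
  calc k * x ^ n ≤ K ^ (n + 1) * x ^ (n + 1) := by
        gcongr
        · exact (le_max_left _ _).trans (le_self_pow₀ hK1 n.succ_ne_zero)
        · omega
    _ = (K * x) ^ (n + 1) := (mul_pow _ _ _).symm
    _ ≤ ((x + c) ^ 2) ^ (n + 1) := by gcongr
    _ = (x + c) ^ (2 * (n + 1)) := (pow_mul _ _ _).symm
    _ ≤ (x + c) ^ (2 * (n + 1)) + k * R ^ n := le_add_of_nonneg_right hCR

theorem sum_le_sqrt_add_pow_of_mistakeBound {C1 C2 C3 H : ℝ} {p : ℕ} (hH : 0 < H)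
    (hC1 : 0 ≤ C1) (hC2 : 1 ≤ C2) (hHC3 : H ≤ C3) (heC3 : exp 1 ≤ C3) {T : ℕ} (hT : 1 ≤ T)
    {Δ : ℕ → ℝ} (hΔ : ∀ j, Δ j ≤ H)
    (hmistake : ∀ ε ∈ Ioc 0 H, (#{j ∈ Finset.Icc 1 T | Δ j > ε} : ℝ) ≤ mistakeBound C1 C2 C3 p ε) :
    ∑ j ∈ Finset.Icc 1 T, Δ j ≤
      √(C2 * T) + C1 * log (C3 * T) ^ (p + 1) + √(C2 * T) * log (C3 * T) ^ (2 * p) := by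
  set s := √(C2 * T)
  set N := log (C3 * T)
  have hT1 : (1 : ℝ) ≤ T := Nat.one_le_cast.2 hT
  have hT0 : (0 : ℝ) < T := one_pos.trans_le hT1
  have hC3 : 0 < C3 := hH.trans_le hHC3
  have hs1 : 1 ≤ s := one_le_sqrt.2 (one_le_mul_of_one_le_of_one_le hC2 hT1)
  have hs_sq : s * s = C2 * T := mul_self_sqrt (by positivity)
  have hN0 : 0 ≤ N := log_nonneg (one_le_mul_of_one_le_of_one_le
    ((one_le_exp zero_le_one).trans heC3) hT1)
  by_cases hsmall : s / T ≤ H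
  · have hε : s / T ∈ Ioc 0 H := ⟨by positivity, hsmall⟩
    have hlog_le : ∀ {b}, 0 < b → b ≤ C3 → log (b / (s / T)) ≤ N := fun hb hbC3 =>
      log_le_log (by positivity) <| by
        rw [div_div_eq_mul_div, div_le_iff₀ (by positivity)]
        nlinarith [mul_le_mul hbC3 hT1 zero_le_one hC3.le]
    calc ∑ j ∈ Finset.Icc 1 T, Δ j
        ≤ T * (s / T) + ∫ ε in s / T..H, mistakeBound C1 C2 C3 p ε :=
          sum_le_mul_add_integral_mistakeBound hC3.ne' T hΔ hmistake hε
      _ ≤ T * (s / T) + (C1 * N ^ p * log (H / (s / T)) + C2 * N ^ (2 * p) / (s / T)) := by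
          gcongr
          exact integral_mistakeBound_le p hC1 (by linarith) hε.1 hsmall hHC3 (hlog_le hC3 le_rfl)
      _ ≤ s + C1 * N ^ (p + 1) + s * N ^ (2 * p) := by
          have hC2s : C2 * N ^ (2 * p) / (s / T) = s * N ^ (2 * p) := by
            field_simp
            rw [sq, hs_sq]
            ring
          rw [mul_div_cancel₀ _ hT0.ne', hC2s, pow_succ, ← mul_assoc C1, ← add_assoc]
          gcongr
          exact hlog_le hH hHC3
  · have hTH : T * H ≤ s := by
      rw [not_le, lt_div_iff₀ hT0] at hsmall
      linarith
    calc ∑ j ∈ Finset.Icc 1 T, Δ j ≤ T * H := by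
          simpa using Finset.sum_le_card_nsmul (Finset.Icc 1 T) Δ H fun j _ => hΔ j
      _ ≤ s + C1 * N ^ (p + 1) + s * N ^ (2 * p) := by
          have : 0 ≤ C1 * N ^ (p + 1) + s * N ^ (2 * p) := by positivity
          linarith

theorem add_mul_pow_add_mul_pow_le {s c N : ℝ} (hs : 0 ≤ s) (hc : 0 ≤ c) (hN : 1 ≤ N) (p : ℕ) :
    s + c * N ^ (p + 1) + s * N ^ (2 * p) ≤ (s + c) * (2 * N ^ (2 * p + 1)) := by
  have h1 : 1 ≤ N ^ (2 * p + 1) := one_le_pow₀ hN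
  have h2 : N ^ (p + 1) ≤ N ^ (2 * p + 1) := pow_le_pow_right₀ hN (by omega)
  have h3 : N ^ (2 * p) ≤ N ^ (2 * p + 1) := pow_le_pow_right₀ hN (by omega)
  nlinarith [mul_le_mul_of_nonneg_left h1 hs, mul_le_mul_of_nonneg_left h2 hc,
    mul_le_mul_of_nonneg_left h3 hs, mul_nonneg hc (zero_le_one.trans h1)]

theorem stmt_11 (H C1 C2 C3 : ℝ) (p : ℕ) (hH : 0 < H)
    (hC12 : C2 ≤ C1) (hC2 : 2 ≤ C2) (hC3 : max H (Real.exp 1) ≤ C3)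
    (Δ : ℕ → ℝ) (hΔ : ∀ j, Δ j ∈ Set.Icc 0 H)
    (hmistake : ∀ ε ∈ Set.Ioc (0:ℝ) H, ∀ T : ℕ,
      (((Finset.Icc 1 T).filter (fun j => Δ j > ε)).card : ℝ)
        ≤ mistakeBound C1 C2 C3 p ε) :
    (∀ T : ℕ, ∀ εmin ∈ Set.Ioc (0:ℝ) H, mistakeBound C1 C2 C3 p εmin ≤ T →
        ∑ j ∈ Finset.Icc 1 T, Δ j
          ≤ T * εmin + ∫ ε in εmin..H, mistakeBound C1 C2 C3 p ε) ∧
    (∃ C : ℝ, ∃ q : ℕ, 0 ≤ C ∧ ∀ T : ℕ, 1 ≤ T →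
        ∑ j ∈ Finset.Icc 1 T, Δ j
          ≤ (Real.sqrt (C2 * T) + C1) *
              ((Real.log (T * C3 * C1 * H)) ^ q + C)) := by
  obtain ⟨hHC3, heC3⟩ := max_le_iff.1 hC3
  have hC3_pos : 0 < C3 := hH.trans_le hHC3
  have hC1 : 0 < C1 := by linarith
  have hΔH : ∀ j, Δ j ≤ H := fun j => (hΔ j).2
  refine ⟨fun T εmin hε _ => sum_le_mul_add_integral_mistakeBound hC3_pos.ne' T hΔH
    (fun ε hε' => hmistake ε hε' T) hε, ?_⟩
  obtain ⟨C, hC0, hC⟩ :=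
    exists_mul_pow_le_add_pow_two_mul zero_le_two (log C1 + log H) (2 * p + 1)
  refine ⟨C, 2 * (2 * p + 1 + 1), hC0, fun T hT => ?_⟩
  have hN1 : 1 ≤ log (C3 * T) := by
    rw [← log_exp 1]
    exact log_le_log (exp_pos 1)
      (heC3.trans (le_mul_of_one_le_right hC3_pos.le (Nat.one_le_cast.2 hT)))
  have hlog : log (T * C3 * C1 * H) = log (C3 * T) + (log C1 + log H) := by
    rw [log_mul (by positivity) hH.ne', log_mul (by positivity) hC1.ne', mul_comm (T : ℝ)]
    ring
  calc ∑ j ∈ Finset.Icc 1 T, Δ j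
      ≤ √(C2 * T) + C1 * log (C3 * T) ^ (p + 1) + √(C2 * T) * log (C3 * T) ^ (2 * p) :=
        sum_le_sqrt_add_pow_of_mistakeBound hH hC1.le (by linarith) hHC3 heC3 hT hΔH
          fun ε hε => hmistake ε hε T
    _ ≤ (√(C2 * T) + C1) * (2 * log (C3 * T) ^ (2 * p + 1)) :=
        add_mul_pow_add_mul_pow_le (sqrt_nonneg _) hC1.le hN1 p
    _ ≤ (√(C2 * T) + C1) * (log (T * C3 * C1 * H) ^ (2 * (2 * p + 1 + 1)) + C) := by
        rw [hlog]
        gcongr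
        exact hC _ (zero_le_one.trans hN1)
end
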